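/- Fix an integer n ≥ 1 and let ḡ₋, σ, F̄ be as defined. Then F̄ has no critical points in the region where F̄ ≥ 0: for every (s, t) ∈ ℝ², if ∂F̄/∂s(s,t) = 0 and ∂F̄/∂t(s,t) = 0, then F̄(s,t) < 0. -/

import Mathlib

/-!
Differentiating in `t` gives `∂ₜF̄ = F̄ + eᵗ σ'(t) (1 - ḡ₋(s))`, and `σ' ≥ 0`, `ḡ₋ ≤ 1`, so at a
critical point `F̄ ≤ 0`. If `F̄ = 0` there, then `σ'(t) (1 - ḡ₋(s)) = 0`, which together with
`(1 - σ)ḡ₋ + σ = 0` forces `σ(t) = 0` and `ḡ₋(s) = 0`. But every zero of `ḡ₋` lies in the open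
interval `(π/2, π)`, where `ḡ₋ = cos (4ns)` has derivative `-4n sin (4ns) ≠ 0`, contradicting
`∂ₛF̄ = 0`.
-/

noncomputable def gBarMinus (n : ℕ) (s : ℝ) : ℝ :=
  if Real.pi / 2 ≤ s ∧ s ≤ Real.pi then Real.cos (4 * n * s) else 1

/-- The flat interpolating function `F̄(s,t) = eᵗ·[(1 − σ(t))·ḡ₋(s) + σ(t)]`. -/
noncomputable def Fbar (n : ℕ) (σ : ℝ → ℝ) (s t : ℝ) : ℝ :=
  Real.exp t * ((1 - σ t) * gBarMinus n s + σ t)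

open Real Set

lemma gBarMinus_le_one (n : ℕ) (s : ℝ) : gBarMinus n s ≤ 1 := by
  unfold gBarMinus
  split_ifs
  exacts [cos_le_one _, le_rfl]

lemma mem_Ioo_of_gBarMinus_eq_zero {n : ℕ} {s : ℝ} (h : gBarMinus n s = 0) :
    s ∈ Ioo (π / 2) π ∧ cos (4 * n * s) = 0 := by
  unfold gBarMinus at h
  split_ifs at h with hmem
  · refine ⟨⟨hmem.1.lt_of_ne ?_, hmem.2.lt_of_ne ?_⟩, h⟩ <;> rintro rfl
    · have : (4 : ℝ) * n * (π / 2) = n * (2 * π) := by ring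
      rw [this, cos_nat_mul_two_pi] at h
      exact one_ne_zero h
    · have : (4 : ℝ) * n * π = (2 * n : ℕ) * (2 * π) := by push_cast; ring
      rw [this, cos_nat_mul_two_pi] at h
      exact one_ne_zero h
  · exact absurd h one_ne_zero

lemma hasDerivAt_gBarMinus {n : ℕ} {s : ℝ} (hs : s ∈ Ioo (π / 2) π) :
    HasDerivAt (gBarMinus n) (-sin (4 * n * s) * (4 * n)) s := by
  have hcos : HasDerivAt (fun x : ℝ => cos (4 * n * x)) (-sin (4 * n * s) * (4 * n)) s := by
    simpa using ((hasDerivAt_id s).const_mul ((4 : ℝ) * n)).cos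
  refine hcos.congr_of_eventuallyEq ?_
  filter_upwards [isOpen_Ioo.mem_nhds hs] with x hx
  simp only [gBarMinus, if_pos (And.intro hx.1.le hx.2.le)]

lemma exists_hasDerivAt_ne_zero_of_gBarMinus_eq_zero {n : ℕ} (hn : 1 ≤ n) {s : ℝ}
    (h : gBarMinus n s = 0) : ∃ g' ≠ 0, HasDerivAt (gBarMinus n) g' s := by
  obtain ⟨hs, hcos⟩ := mem_Ioo_of_gBarMinus_eq_zero h
  refine ⟨_, ?_, hasDerivAt_gBarMinus hs⟩
  have hsin : sin (4 * n * s) ≠ 0 := by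
    intro hsin
    simpa [hsin, hcos] using sin_sq_add_cos_sq (4 * n * s)
  have hn' : (4 : ℝ) * n ≠ 0 := by positivity
  exact mul_ne_zero (neg_ne_zero.mpr hsin) hn'

section Fbar

variable {n : ℕ} {σ : ℝ → ℝ} {s t : ℝ}

lemma hasDerivAt_Fbar_left {g' : ℝ} (hg : HasDerivAt (gBarMinus n) g' s) :
    HasDerivAt (fun s' => Fbar n σ s' t) (exp t * (1 - σ t) * g') s :=
  (((hg.const_mul (1 - σ t)).add_const (σ t)).const_mul (exp t)).congr_deriv (by ring)

lemma hasDerivAt_Fbar_right {σ' : ℝ} (hσ : HasDerivAt σ σ' t) :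
    HasDerivAt (Fbar n σ s) (Fbar n σ s t + exp t * σ' * (1 - gBarMinus n s)) t :=
  ((hasDerivAt_exp t).mul
    ((((hasDerivAt_const t 1).sub hσ).mul_const (gBarMinus n s)).add hσ)).congr_deriv
    (by simp only [Fbar, Pi.add_apply, Pi.sub_apply]; ring)

end Fbar

lemma lt_one_of_interp_eq_zero {a g : ℝ} (ha : a ≤ 1) (hg : g ≤ 1) (h : (1 - a) * g + a = 0) :
    a < 1 ∧ g < 1 := by
  refine ⟨ha.lt_of_ne ?_, hg.lt_of_ne ?_⟩ <;> rintro rfl <;> linarith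

/-- The flat interpolating function `F̄` has no critical points in the region where
`F̄ ≥ 0`: if both partial derivatives of `F̄` vanish at `(s, t)`, then `F̄(s, t) < 0`. -/
theorem Fbar_neg_of_critical (n : ℕ) (hn : 1 ≤ n) (σ : ℝ → ℝ)
    (hσ : ContDiff ℝ 1 σ) (hmono : Monotone σ)
    (hbd : ∀ t, 0 ≤ σ t ∧ σ t ≤ 1)
    (hpos : ∀ t, 0 < σ t → σ t < 1 → 0 < deriv σ t)
    (s t : ℝ)
    (hs : deriv (fun s' => Fbar n σ s' t) s = 0)
    (ht : deriv (fun t' => Fbar n σ s t') t = 0) :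
    Fbar n σ s t < 0 := by
  have hσt : HasDerivAt σ (deriv σ t) t := (hσ.differentiable one_ne_zero t).hasDerivAt
  have hF : Fbar n σ s t = -(exp t * deriv σ t * (1 - gBarMinus n s)) := by
    rw [(hasDerivAt_Fbar_right hσt).deriv] at ht
    linarith
  have hg_le := gBarMinus_le_one n s
  have hF_nonpos : Fbar n σ s t ≤ 0 := by
    rw [hF, neg_nonpos]
    exact mul_nonneg (mul_nonneg (exp_pos t).le hmono.deriv_nonneg) (sub_nonneg.mpr hg_le)
  refine hF_nonpos.lt_of_ne fun hF0 => ?_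
  have hval : (1 - σ t) * gBarMinus n s + σ t = 0 := by
    simpa [Fbar, exp_ne_zero] using hF0
  obtain ⟨hσ_lt, hg_lt⟩ := lt_one_of_interp_eq_zero (hbd t).2 hg_le hval
  have hσ'_zero : deriv σ t = 0 := by
    have : exp t * deriv σ t * (1 - gBarMinus n s) = 0 := by linarith
    simpa [exp_ne_zero, sub_eq_zero, hg_lt.ne'] using this
  have hσ_zero : σ t = 0 :=
    le_antisymm (not_lt.mp fun h => (hpos t h hσ_lt).ne' hσ'_zero) (hbd t).1
  obtain ⟨g', hg', hderiv⟩ :=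
    exists_hasDerivAt_ne_zero_of_gBarMinus_eq_zero hn (by simpa [hσ_zero] using hval)
  rw [(hasDerivAt_Fbar_left hderiv).deriv, hσ_zero] at hs
  simp [exp_ne_zero, hg'] at hs
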